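/- Suppose Φ is of type B_n. Then 𝒴'_{r,j} ⊆ 𝒴'_{r,j+1} for every 0 ≤ j < n − p_k, and 𝒴'_{r,n−p_k} ⊆ 𝒴_r. -/
import Mathlib


open Finset

inductive RSType where
  | B
  | C
  | D
deriving DecidableEq

noncomputable def eps (n : ℕ) (i : Fin n) : Fin n → ℝ := fun j => if j = i then 1 else 0

noncomputable def simpleRoot (n : ℕ) (t : RSType) (i : Fin n) : Fin n → ℝ :=
  if (i : ℕ) + 1 < n then
    eps n i - (fun j : Fin n => if (j : ℕ) = (i : ℕ) + 1 then 1 else 0)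
  else
    match t with
    | RSType.B => eps n i
    | RSType.C => (2 : ℝ) • eps n i
    | RSType.D => (fun j : Fin n => if (j : ℕ) + 1 = (i : ℕ) then 1 else 0) + eps n i

noncomputable def inn (n : ℕ) (x y : Fin n → ℝ) : ℝ := ∑ i, x i * y i

noncomputable def pairing (n : ℕ) (x y : Fin n → ℝ) : ℝ := 2 * inn n x y / inn n y y

/-- Membership in `Λ^{𝔭_I}` where `I = Π \ {α_{p 1}, …, α_{p k}}`:
`⟨μ, α^∨⟩ ∈ ℕ` for all simple roots `α ∈ I`. -/
def inLam (n : ℕ) (t : RSType) (p : ℕ → ℕ) (k : ℕ) (μ : Fin n → ℝ) : Prop :=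
  ∀ i : Fin n, (∀ j, 1 ≤ j → j ≤ k → (i : ℕ) + 1 ≠ p j) →
    ∃ m : ℕ, pairing n μ (simpleRoot n t i) = (m : ℝ)

def inLamZ (n : ℕ) (t : RSType) (p : ℕ → ℕ) (k : ℕ) (a : Fin n → ℤ) : Prop :=
  inLam n t p k (fun i => (a i : ℝ))

/-- `𝒳_r = {a ∈ ℤ^n : Σ |a_i| ≤ r}` (empty if `r < 0`). -/
def Xr (n : ℕ) (r : ℤ) : Set (Fin n → ℤ) := {a | ∑ i, |a i| ≤ r}

/-- `𝒳'_r = {a ∈ 𝒳_r : Σ a_i ≡ r (mod 2)}`. -/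
def Xr' (n : ℕ) (r : ℤ) : Set (Fin n → ℤ) :=
  {a | a ∈ Xr n r ∧ (2 : ℤ) ∣ ((∑ i, a i) - r)}

/-- `𝒳'_{r,j}`: for `j < n - pk` those `a ∈ 𝒳'_r` with `a_{n-j} ≠ 0`; and
`𝒳'_{r, n - pk} = 𝒳'_r`. -/
def Xrj (n : ℕ) (pk : ℕ) (r : ℤ) (j : ℕ) : Set (Fin n → ℤ) :=
  if j = n - pk then Xr' n r
  else {a | a ∈ Xr' n r ∧ ∃ i : Fin n, (i : ℕ) + j + 1 = n ∧ a i ≠ 0}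

def Yr (n : ℕ) (t : RSType) (p : ℕ → ℕ) (k : ℕ) (r : ℤ) : Set (Fin n → ℤ) :=
  {a | a ∈ Xr n r ∧ inLamZ n t p k a}

def Yr' (n : ℕ) (t : RSType) (p : ℕ → ℕ) (k : ℕ) (r : ℤ) : Set (Fin n → ℤ) :=
  {a | a ∈ Xr' n r ∧ inLamZ n t p k a}

def Yrj (n : ℕ) (t : RSType) (p : ℕ → ℕ) (k : ℕ) (r : ℤ) (j : ℕ) : Set (Fin n → ℤ) :=
  {a | a ∈ Xrj n (p k) r j ∧ inLamZ n t p k a}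

def epsZ (n : ℕ) (i : Fin n) : Fin n → ℤ := fun j => if j = i then 1 else 0

/-- The set `S_μ`: in type `B_n`, if `α_n ∉ I` (i.e. `p k = n`) or `μ_n ≠ 0`, it is
`{μ + hε_i ∈ Λ^{𝔭_I} : 1 ≤ i ≤ n, h ∈ {0, 1, -1}}`; otherwise (and in types `C_n`,
`D_n`) it is `{μ + hε_i ∈ Λ^{𝔭_I} : 1 ≤ i ≤ n, h ∈ {1, -1}}`. -/
def SS (n : ℕ) (t : RSType) (p : ℕ → ℕ) (k : ℕ) (μ : Fin n → ℤ) : Set (Fin n → ℤ) :=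
  {ν | (∃ (i : Fin n) (h : ℤ),
          h ∈ (if t = RSType.B ∧ (p k = n ∨ ∃ i' : Fin n, (i' : ℕ) = n - 1 ∧ μ i' ≠ 0)
               then ({0, 1, -1} : Set ℤ) else ({1, -1} : Set ℤ)) ∧
          ν = μ + h • epsZ n i) ∧
        inLamZ n t p k ν}

/-- `K_0 = {0}` and `K_r = ⋃_{μ ∈ K_{r-1}} S_μ`. -/
def KK (n : ℕ) (t : RSType) (p : ℕ → ℕ) (k : ℕ) : ℕ → Set (Fin n → ℤ)
  | 0 => {0}
  | r + 1 => ⋃ μ ∈ KK n t p k r, SS n t p k μ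

lemma inn_eps_right (n : ℕ) (μ : Fin n → ℝ) (i : Fin n) : inn n μ (eps n i) = μ i := by
  simp [inn, eps, mul_ite, mul_one, mul_zero]

lemma inn_sub_left (n : ℕ) (x y z : Fin n → ℝ) : inn n (x - y) z = inn n x z - inn n y z := by
  simp [inn, sub_mul, Finset.sum_sub_distrib]

lemma inn_sub_right (n : ℕ) (x y z : Fin n → ℝ) : inn n x (y - z) = inn n x y - inn n x z := by
  simp [inn, mul_sub, Finset.sum_sub_distrib]

lemma pairing_B_lt (n : ℕ) (μ : Fin n → ℝ) (i : Fin n) (h : (i : ℕ) + 1 < n) :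
    pairing n μ (simpleRoot n RSType.B i) = μ i - μ ⟨(i : ℕ) + 1, h⟩ := by
  have hroot : simpleRoot n RSType.B i = eps n i - eps n ⟨(i : ℕ) + 1, h⟩ := by
    unfold simpleRoot
    rw [if_pos h]
    funext j
    simp [eps, Fin.ext_iff]
  have hne : (⟨(i : ℕ) + 1, h⟩ : Fin n) ≠ i := Fin.ne_of_val_ne (by simp)
  rw [pairing, hroot]
  simp only [inn_sub_right, inn_sub_left, inn_eps_right]
  simp only [Pi.sub_apply]
  rw [show eps n i i = 1 from if_pos rfl,
    show eps n ⟨(i : ℕ) + 1, h⟩ i = 0 from if_neg (Ne.symm hne),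
    show eps n i ⟨(i : ℕ) + 1, h⟩ = 0 from if_neg hne,
    show eps n ⟨(i : ℕ) + 1, h⟩ ⟨(i : ℕ) + 1, h⟩ = 1 from if_pos rfl]
  ring

lemma pairing_B_last (n : ℕ) (μ : Fin n → ℝ) (i : Fin n) (h : ¬ ((i : ℕ) + 1 < n)) :
    pairing n μ (simpleRoot n RSType.B i) = 2 * μ i := by
  have hroot : simpleRoot n RSType.B i = eps n i := by
    unfold simpleRoot; rw [if_neg h]
  rw [pairing, hroot, inn_eps_right, inn_eps_right]
  simp [eps]

lemma step_le (n k : ℕ) (p : ℕ → ℕ) (a : Fin n → ℤ)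
    (hlam : inLamZ n RSType.B p k a)
    (hpb : ∀ j, 1 ≤ j → j ≤ k → p j ≤ p k)
    (i : Fin n) (h : (i : ℕ) + 1 < n) (hgt : p k < (i : ℕ) + 1) :
    a ⟨(i : ℕ) + 1, h⟩ ≤ a i := by
  obtain ⟨m, hm⟩ := hlam i (fun j h1 h2 => by have := hpb j h1 h2; omega)
  rw [pairing_B_lt n _ i h] at hm
  have h2 : ((a i : ℝ)) - (a ⟨(i : ℕ) + 1, h⟩ : ℝ) = (m : ℝ) := hm
  have h3 : a i - a ⟨(i : ℕ) + 1, h⟩ = (m : ℤ) := by exact_mod_cast h2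
  omega

lemma last_nonneg (n k : ℕ) (p : ℕ → ℕ) (a : Fin n → ℤ)
    (hlam : inLamZ n RSType.B p k a)
    (hpb : ∀ j, 1 ≤ j → j ≤ k → p j ≤ p k) (hpkn : p k < n)
    (i : Fin n) (h : ¬ ((i : ℕ) + 1 < n)) :
    0 ≤ a i := by
  obtain ⟨m, hm⟩ := hlam i (fun j h1 h2 => by
    have := hpb j h1 h2
    have := i.isLt
    omega)
  rw [pairing_B_last n _ i h] at hm
  have h2 : (2 : ℝ) * (a i : ℝ) = (m : ℝ) := hm
  have h3 : 2 * a i = (m : ℤ) := by exact_mod_cast h2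
  omega

lemma tail_nonneg (n k : ℕ) (p : ℕ → ℕ) (a : Fin n → ℤ)
    (hlam : inLamZ n RSType.B p k a)
    (hpb : ∀ j, 1 ≤ j → j ≤ k → p j ≤ p k) (hpkn : p k < n) :
    ∀ d : ℕ, ∀ i : Fin n, n - 1 - (i : ℕ) ≤ d → p k ≤ (i : ℕ) → 0 ≤ a i := by
  intro d
  induction d with
  | zero =>
    intro i hi _
    have := i.isLt
    exact last_nonneg n k p a hlam hpb hpkn i (by omega)
  | succ d ih =>
    intro i hi hpi
    by_cases h : (i : ℕ) + 1 < n
    · have h2 : 0 ≤ a ⟨(i : ℕ) + 1, h⟩ := ih ⟨(i : ℕ) + 1, h⟩ (by simp; omega) (by simp; omega)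
      have h3 := step_le n k p a hlam hpb i h (by omega)
      omega
    · exact last_nonneg n k p a hlam hpb hpkn i h

/-- Equation (6.2): in type `B_n`, `𝒴'_{r,0} ⊆ 𝒴'_{r,1} ⊆ ⋯ ⊆ 𝒴'_{r,n-p_k} ⊆ 𝒴_r`. -/
theorem stmt16 (n k : ℕ) (hn : 2 ≤ n)
    (p : ℕ → ℕ) (hp0 : p 0 = 0)
    (hmono : ∀ j, j < k → p j < p (j + 1))
    (hpk : p k ≤ n) (hpk1 : p (k + 1) = n)
    (r : ℕ) :
    (∀ j, j < n - p k →
      Yrj n RSType.B p k (r : ℤ) j ⊆ Yrj n RSType.B p k (r : ℤ) (j + 1)) ∧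
    Yrj n RSType.B p k (r : ℤ) (n - p k) ⊆ Yr n RSType.B p k (r : ℤ) := by
  have hpb : ∀ j, 1 ≤ j → j ≤ k → p j ≤ p k := by
    intro j h1 h2
    have : ∀ d, j + d ≤ k → p j ≤ p (j + d) := by
      intro d
      induction d with
      | zero => intro _; simp
      | succ d ih =>
        intro hd
        have := hmono (j + d) (by omega)
        have := ih (by omega)
        have he : j + (d + 1) = (j + d) + 1 := by omega
        rw [he]
        omega
    have := this (k - j) (by omega)
    simpa [Nat.add_sub_cancel' h2] using this
  constructor
  · intro j hj a ha
    obtain ⟨hx, hlam⟩ := ha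
    refine ⟨?_, hlam⟩
    have hpkn : p k < n := by omega
    unfold Xrj at hx ⊢
    rw [if_neg (by omega : j ≠ n - p k)] at hx
    by_cases h1 : j + 1 = n - p k
    · rw [if_pos h1]; exact hx.1
    · rw [if_neg h1]
      obtain ⟨hxr, i, hi, hne⟩ := hx
      have hilt := i.isLt
      have hgt : p k < (i : ℕ) := by omega
      have hipos : 1 ≤ (i : ℕ) := by omega
      have hnn : 0 ≤ a i :=
        tail_nonneg n k p a hlam hpb hpkn (n - 1 - (i : ℕ)) i le_rfl (by omega)
      set i0 : Fin n := ⟨(i : ℕ) - 1, by omega⟩ with hi0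
      have hlt : (i0 : ℕ) + 1 < n := by simp [hi0]; omega
      have heq : (⟨(i0 : ℕ) + 1, hlt⟩ : Fin n) = i := by
        simp only [Fin.ext_iff, hi0]; omega
      have hstep := step_le n k p a hlam hpb i0 hlt (by simp [hi0]; omega)
      rw [heq] at hstep
      refine ⟨hxr, i0, by simp [hi0]; omega, ?_⟩
      omega
  · intro a ha
    obtain ⟨hx, hlam⟩ := ha
    refine ⟨?_, hlam⟩
    unfold Xrj at hx
    rw [if_pos rfl] at hx
    exact hx.1
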